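/- arXiv:math/0610678 — 2 statements merged into one kernel-verified Lean document; each statement's English description precedes it below -/
import Mathlib

section
/- Let f : Z → X, g : Z → Y, h : X → T, s : Y → T form a bicommutative square (h∘f = s∘g and for all x, y with h(x) = s(y) there is z with f(z)=x, g(z)=y), with f, g, h, s surjective. Let μ, ν, τ be capacities on X, Y, T with μ(h⁻¹(E)) = τ(E) = ν(s⁻¹(E)) for all E ⊆ T. Define λ(D) = sup over all C ⊆ D of the form C = f⁻¹(A) or C = g⁻¹(B) of the corresponding value μ(A) resp. ν(B) (equivalently λ(D) = max( sup{μ(A) : f⁻¹(A) ⊆ D}, sup{ν(B) : g⁻¹(B) ⊆ D} )). Then λ(f⁻¹(A)) = μ(A) for every A ⊆ X. -/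
/-- In a bicommutative square of surjections with a common marginal capacity
`τ` on `T`, the inner extension
`λ(D) = max(sup{μ(A) : f⁻¹(A) ⊆ D}, sup{ν(B) : g⁻¹(B) ⊆ D})`
pulls back `μ` correctly: `λ(f⁻¹(A)) = μ(A)`. -/
theorem inner_extension_marginal {Z X Y T : Type*}
    [Fintype Z] [Fintype X] [Fintype Y] [Fintype T]
    (f : Z → X) (g : Z → Y) (h : X → T) (s : Y → T)
    (hf : Function.Surjective f) (hg : Function.Surjective g)
    (hh : Function.Surjective h) (hs : Function.Surjective s)
    (hcomm : h ∘ f = s ∘ g)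
    (hbicomm : ∀ x y, h x = s y → ∃ z, f z = x ∧ g z = y)
    (μ : Set X → ℝ) (ν : Set Y → ℝ) (τ : Set T → ℝ)
    (hμ0 : μ ∅ = 0) (hμ1 : μ Set.univ = 1)
    (hμmono : ∀ A B : Set X, A ⊆ B → μ A ≤ μ B)
    (hν0 : ν ∅ = 0) (hν1 : ν Set.univ = 1)
    (hνmono : ∀ A B : Set Y, A ⊆ B → ν A ≤ ν B)
    (hτ0 : τ ∅ = 0) (hτ1 : τ Set.univ = 1)
    (hτmono : ∀ A B : Set T, A ⊆ B → τ A ≤ τ B)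
    (hμmarg : ∀ E : Set T, μ (h ⁻¹' E) = τ E)
    (hνmarg : ∀ E : Set T, ν (s ⁻¹' E) = τ E)
    (A : Set X) :
    max (sSup {r | ∃ A' : Set X, f ⁻¹' A' ⊆ f ⁻¹' A ∧ r = μ A'})
        (sSup {r | ∃ B : Set Y, g ⁻¹' B ⊆ f ⁻¹' A ∧ r = ν B}) = μ A := by
  have hμA0 : (0 : ℝ) ≤ μ A := hμ0 ▸ hμmono ∅ A (Set.empty_subset A)
  have h1 : sSup {r | ∃ A' : Set X, f ⁻¹' A' ⊆ f ⁻¹' A ∧ r = μ A'} = μ A := by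
    apply le_antisymm
    · apply Real.sSup_le _ hμA0
      rintro r ⟨A', hsub, rfl⟩
      exact hμmono A' A (fun x hx => hf x |>.elim (fun z hz => by
        have : z ∈ f ⁻¹' A' := by simp [Set.mem_preimage, hz, hx]
        simpa [Set.mem_preimage, hz] using hsub this))
    · apply le_csSup
      · refine ⟨μ A, ?_⟩
        rintro r ⟨A', hsub, rfl⟩
        exact hμmono A' A (fun x hx => hf x |>.elim (fun z hz => by
          have : z ∈ f ⁻¹' A' := by simp [Set.mem_preimage, hz, hx]
          simpa [Set.mem_preimage, hz] using hsub this))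
      · exact ⟨A, subset_rfl, rfl⟩
  have h2 : sSup {r | ∃ B : Set Y, g ⁻¹' B ⊆ f ⁻¹' A ∧ r = ν B} ≤ μ A := by
    apply Real.sSup_le _ hμA0
    rintro r ⟨B, hsub, rfl⟩
    calc ν B ≤ ν (s ⁻¹' (s '' B)) := hνmono _ _ (Set.subset_preimage_image s B)
      _ = τ (s '' B) := hνmarg _
      _ = μ (h ⁻¹' (s '' B)) := (hμmarg _).symm
      _ ≤ μ A := by
          apply hμmono
          rintro x ⟨y, hyB, hxy⟩
          obtain ⟨z, hzf, hzg⟩ := hbicomm x y hxy.symm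
          have : z ∈ g ⁻¹' B := by simp [Set.mem_preimage, hzg, hyB]
          simpa [Set.mem_preimage, hzf] using hsub this
  rw [h1]
  exact max_eq_left (h1 ▸ h2 : _ ≤ μ A)
end

section
/- Combining the construction: given a capacity λ⁰ on lim O and capacities (μ_o) with |μ_o(W) − λ⁰(pr_o⁻¹(W) ∩ lim O)| < δ for all o, W, the clamped set function λ(A) = max{l_A, min{u_A, λ⁰(A)}} is a capacity on lim O satisfying |λ(A) − λ⁰(A)| < δ for all A and having exact marginals: λ(pr_{o'}⁻¹(W) ∩ lim O) = μ_{o'}(W) for all o', W. -/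
/-- The space of threads of a diagram `O` of sets over a finite poset `ι`
with bonding maps `φ`. -/
def Thread {ι : Type*} [PartialOrder ι] (O : ι → Type*)
    (φ : ∀ ⦃o₁ o₂ : ι⦄, o₁ ≤ o₂ → O o₂ → O o₁) : Type _ :=
  {x : ∀ o, O o // ∀ (o₁ o₂ : ι) (h : o₁ ≤ o₂), x o₁ = φ h (x o₂)}

/-- The cylinder `pr_{o'}⁻¹(W) ∩ lim O` over `W ⊆ O(o')`. -/
def cyl {ι : Type*} [PartialOrder ι] {O : ι → Type*}
    {φ : ∀ ⦃o₁ o₂ : ι⦄, o₁ ≤ o₂ → O o₂ → O o₁}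
    (o' : ι) (W : Set (O o')) : Set (Thread O φ) :=
  {z | z.1 o' ∈ W}


/-- The lower bound `l_A` built from marginal capacities. -/
noncomputable def lBound {ι : Type*} [PartialOrder ι] {O : ι → Type*}
    (φ : ∀ ⦃o₁ o₂ : ι⦄, o₁ ≤ o₂ → O o₂ → O o₁)
    (μ : ∀ o, Set (O o) → ℝ) (A : Set (Thread O φ)) : ℝ :=
  sSup {r | ∃ (o : ι) (W : Set (O o)), cyl o W ⊆ A ∧ r = μ o W}

/-- The upper bound `u_A` built from marginal capacities. -/
noncomputable def uBound {ι : Type*} [PartialOrder ι] {O : ι → Type*}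
    (φ : ∀ ⦃o₁ o₂ : ι⦄, o₁ ≤ o₂ → O o₂ → O o₁)
    (μ : ∀ o, Set (O o) → ℝ) (A : Set (Thread O φ)) : ℝ :=
  sInf {r | ∃ (o : ι) (W : Set (O o)), A ⊆ cyl o W ∧ r = μ o W}

/-- Combining the construction: if the capacities `μ_o` are `δ`-close to the
marginals of a capacity `λ⁰` on the limit and `l_A ≤ u_A` for all `A`, then
`λ(A) = max{l_A, min{u_A, λ⁰(A)}}` is a capacity, `δ`-close to `λ⁰`, with
exact marginals `λ(pr_{o'}⁻¹(W) ∩ lim O) = μ_{o'}(W)`. -/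
theorem clamped_capacity_with_marginals {ι : Type*} [Fintype ι] [Nonempty ι]
    [PartialOrder ι]
    (O : ι → Type*) [∀ o, Fintype (O o)]
    (φ : ∀ ⦃o₁ o₂ : ι⦄, o₁ ≤ o₂ → O o₂ → O o₁)
    (μ : ∀ o, Set (O o) → ℝ)
    (hμ0 : ∀ o, μ o ∅ = 0) (hμ1 : ∀ o, μ o Set.univ = 1)
    (hμmono : ∀ o, ∀ A B : Set (O o), A ⊆ B → μ o A ≤ μ o B)
    (lam0 : Set (Thread O φ) → ℝ)
    (hlam00 : lam0 ∅ = 0) (hlam01 : lam0 Set.univ = 1)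
    (hlam0mono : ∀ A B : Set (Thread O φ), A ⊆ B → lam0 A ≤ lam0 B)
    (δ : ℝ) (hδ : 0 < δ)
    (hclose : ∀ (o : ι) (W : Set (O o)), |μ o W - lam0 (cyl o W)| < δ)
    (hlu : ∀ A : Set (Thread O φ), lBound φ μ A ≤ uBound φ μ A) :
    (fun A => max (lBound φ μ A) (min (uBound φ μ A) (lam0 A))) ∅ = 0 ∧
    (fun A => max (lBound φ μ A) (min (uBound φ μ A) (lam0 A))) Set.univ = 1 ∧
    (∀ A B : Set (Thread O φ), A ⊆ B →
      (fun A => max (lBound φ μ A) (min (uBound φ μ A) (lam0 A))) A ≤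
      (fun A => max (lBound φ μ A) (min (uBound φ μ A) (lam0 A))) B) ∧
    (∀ A : Set (Thread O φ),
      |(fun A => max (lBound φ μ A) (min (uBound φ μ A) (lam0 A))) A -
        lam0 A| < δ) ∧
    ∀ (o' : ι) (W : Set (O o')),
      (fun A => max (lBound φ μ A) (min (uBound φ μ A) (lam0 A)))
        (cyl o' W) = μ o' W := by
  classical
  set lS := fun A : Set (Thread O φ) =>
    {r | ∃ (o : ι) (W : Set (O o)), cyl o W ⊆ A ∧ r = μ o W} with hlS
  set uS := fun A : Set (Thread O φ) =>
    {r | ∃ (o : ι) (W : Set (O o)), A ⊆ cyl o W ∧ r = μ o W} with huS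
  have hlB : ∀ A, lBound φ μ A = sSup (lS A) := fun A => rfl
  have huB : ∀ A, uBound φ μ A = sInf (uS A) := fun A => rfl
  have hfin : ∀ A, (lS A).Finite ∧ (uS A).Finite := by
    intro A
    constructor <;>
    · apply Set.Finite.subset (Set.finite_iUnion (fun o : ι => Set.finite_range (μ o)))
      rintro r ⟨o, W, -, rfl⟩
      exact Set.mem_iUnion.2 ⟨o, ⟨W, rfl⟩⟩
  obtain ⟨o₀⟩ := (inferInstance : Nonempty ι)
  have hneL : ∀ A, (lS A).Nonempty := fun A =>
    ⟨μ o₀ ∅, o₀, ∅, fun z hz => hz.elim, rfl⟩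
  have hneU : ∀ A, (uS A).Nonempty := fun A =>
    ⟨μ o₀ Set.univ, o₀, Set.univ, fun z _ => Set.mem_univ _, rfl⟩
  have hLmem : ∀ A, lBound φ μ A ∈ lS A := fun A =>
    (hneL A).csSup_mem (hfin A).1
  have hUmem : ∀ A, uBound φ μ A ∈ uS A := fun A =>
    (hneU A).csInf_mem (hfin A).2
  have hLge : ∀ A, ∀ r ∈ lS A, r ≤ lBound φ μ A := fun A r hr =>
    le_csSup (hfin A).1.bddAbove hr
  have hUle : ∀ A, ∀ r ∈ uS A, uBound φ μ A ≤ r := fun A r hr =>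
    csInf_le (hfin A).2.bddBelow hr
  -- strict bounds relating to lam0
  have hLlt : ∀ A, lBound φ μ A < lam0 A + δ := by
    intro A
    obtain ⟨o, W, hsub, heq⟩ := hLmem A
    have h1 := abs_lt.1 (hclose o W)
    have h2 := hlam0mono _ _ hsub
    rw [heq]; linarith [h1.2]
  have hUgt : ∀ A, lam0 A - δ < uBound φ μ A := by
    intro A
    obtain ⟨o, W, hsub, heq⟩ := hUmem A
    have h1 := abs_lt.1 (hclose o W)
    have h2 := hlam0mono _ _ hsub
    rw [heq]; linarith [h1.1]
  -- empty and universal values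
  have hL0 : (0 : ℝ) ∈ lS (∅ : Set (Thread O φ)) :=
    ⟨o₀, ∅, fun z hz => hz.elim, (hμ0 o₀).symm⟩
  have hU0 : (0 : ℝ) ∈ uS (∅ : Set (Thread O φ)) :=
    ⟨o₀, ∅, Set.empty_subset _, (hμ0 o₀).symm⟩
  have hL1 : (1 : ℝ) ∈ lS (Set.univ : Set (Thread O φ)) :=
    ⟨o₀, Set.univ, Set.subset_univ _, (hμ1 o₀).symm⟩
  have hU1 : (1 : ℝ) ∈ uS (Set.univ : Set (Thread O φ)) :=
    ⟨o₀, Set.univ, fun z _ => Set.mem_univ _, (hμ1 o₀).symm⟩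
  have hLempty : lBound φ μ (∅ : Set (Thread O φ)) = 0 :=
    le_antisymm (le_trans (hlu ∅) (hUle _ _ hU0)) (hLge _ _ hL0)
  have hUempty : uBound φ μ (∅ : Set (Thread O φ)) = 0 :=
    le_antisymm (hUle _ _ hU0) (hLempty ▸ hlu ∅)
  have hLuniv : lBound φ μ (Set.univ : Set (Thread O φ)) = 1 :=
    le_antisymm (le_trans (hlu _) (hUle _ _ hU1)) (hLge _ _ hL1)
  have hUuniv : uBound φ μ (Set.univ : Set (Thread O φ)) = 1 :=
    le_antisymm (hUle _ _ hU1) (hLuniv ▸ hlu _)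
  refine ⟨?_, ?_, ?_, ?_, ?_⟩
  · simp [hLempty, hUempty, hlam00]
  · simp [hLuniv, hUuniv, hlam01]
  · intro A B hAB
    have hLmono : lBound φ μ A ≤ lBound φ μ B := by
      apply csSup_le_csSup (hfin B).1.bddAbove (hneL A)
      rintro r ⟨o, W, hsub, rfl⟩
      exact ⟨o, W, hsub.trans hAB, rfl⟩
    have hUmono : uBound φ μ A ≤ uBound φ μ B := by
      apply csInf_le_csInf (hfin A).2.bddBelow (hneU B)
      rintro r ⟨o, W, hsub, rfl⟩
      exact ⟨o, W, hAB.trans hsub, rfl⟩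
    have := hlam0mono A B hAB
    simp only
    exact max_le_max hLmono (min_le_min hUmono this)
  · intro A
    have h1 := hLlt A
    have h2 := hUgt A
    have h3 := hlu A
    simp only
    rw [abs_lt]
    constructor
    · have : min (uBound φ μ A) (lam0 A) ≥ min (uBound φ μ A) (lam0 A) := le_refl _
      have hmin : lam0 A - δ < min (uBound φ μ A) (lam0 A) := by
        rcases min_cases (uBound φ μ A) (lam0 A) with ⟨h, _⟩ | ⟨h, _⟩ <;> rw [h] <;> linarith
      have := le_max_right (lBound φ μ A) (min (uBound φ μ A) (lam0 A))
      linarith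
    · have hmax : max (lBound φ μ A) (min (uBound φ μ A) (lam0 A)) < lam0 A + δ := by
        rcases max_cases (lBound φ μ A) (min (uBound φ μ A) (lam0 A)) with ⟨h, _⟩ | ⟨h, _⟩ <;>
          rw [h]
        · linarith
        · have := min_le_right (uBound φ μ A) (lam0 A)
          linarith
      linarith
  · intro o' W
    have hmemL : μ o' W ∈ lS (cyl o' W) := ⟨o', W, subset_rfl, rfl⟩
    have hmemU : μ o' W ∈ uS (cyl o' W) := ⟨o', W, subset_rfl, rfl⟩
    have h1 : μ o' W ≤ lBound φ μ (cyl o' W) := hLge _ _ hmemL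
    have h2 : uBound φ μ (cyl o' W) ≤ μ o' W := hUle _ _ hmemU
    have h3 := hlu (cyl o' W)
    have hLeq : lBound φ μ (cyl o' W) = μ o' W := le_antisymm (h3.trans h2) h1
    have hUeq : uBound φ μ (cyl o' W) = μ o' W := le_antisymm h2 (h1.trans h3)
    simp only [hLeq, hUeq]
    rcases le_total (lam0 (cyl o' W)) (μ o' W) with h | h
    · rw [min_eq_right h, max_eq_left h]
    · rw [min_eq_left h, max_self]
end
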